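/- For each ρ ∈ {1,…,n−1} and each x ∈ ℝ^n, if (x, xxᵀ) ∈ F^{R3}_ρ then (x, xxᵀ) ∈ F^{R3}_{ρ+1}; i.e., the sets of rank-one solutions of the projected SDP-RLT feasible sets are nested in ρ. -/

import Mathlib

open Matrix BigOperators

noncomputable section

def R1Feasible {n : ℕ} (ρ : ℕ) (x u : Fin n → ℝ)
    (X U R : Matrix (Fin n) (Fin n) ℝ) : Prop :=
  X.IsSymm ∧ U.IsSymm ∧
  (∑ i, x i) = 1 ∧
  (∑ i, u i) = (ρ : ℝ) ∧
  (∀ i, x i ≤ u i) ∧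
  (∀ i, 0 ≤ x i) ∧
  (∀ i, U i i = u i) ∧
  (∀ i, (∑ j, X i j) = x i) ∧
  (∀ j, (∑ i, R i j) = u j) ∧
  (∀ i, (∑ j, R i j) = (ρ : ℝ) * x i) ∧
  (∀ i, (∑ j, U i j) = (ρ : ℝ) * u i) ∧
  (∀ i j, 0 ≤ X i j - R j i - R i j + U i j) ∧
  (∀ i j, X i j - R j i ≤ 0) ∧
  (∀ i j, R i j - U i j ≤ 0) ∧
  (∀ i j, 0 ≤ X i j) ∧ (∀ i j, 0 ≤ R i j) ∧ (∀ i j, 0 ≤ U i j)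

def FR1proj (n ρ : ℕ) : Set ((Fin n → ℝ) × Matrix (Fin n) (Fin n) ℝ) :=
  {p | ∃ u U R, R1Feasible ρ p.1 u p.2 U R}

def FR1 (n : ℕ) : Set ((Fin n → ℝ) × Matrix (Fin n) (Fin n) ℝ) :=
  {p | p.2.IsSymm ∧ (∑ i, p.1 i) = 1 ∧ (∀ i, (∑ j, p.2 i j) = p.1 i) ∧
    (∀ i, 0 ≤ p.1 i) ∧ (∀ i j, 0 ≤ p.2 i j)}

def bigMat {n : ℕ} (x u : Fin n → ℝ) (X U R : Matrix (Fin n) (Fin n) ℝ) :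
    Matrix (Unit ⊕ (Fin n ⊕ Fin n)) (Unit ⊕ (Fin n ⊕ Fin n)) ℝ :=
  Matrix.fromBlocks (Matrix.of fun _ _ => (1 : ℝ))
    (Matrix.of fun (_ : Unit) j => Sum.elim x u j)
    (Matrix.of fun i (_ : Unit) => Sum.elim x u i)
    (Matrix.fromBlocks X R Rᵀ U)

def R3Feasible {n : ℕ} (ρ : ℕ) (x u : Fin n → ℝ)
    (X U R : Matrix (Fin n) (Fin n) ℝ) : Prop :=
  R1Feasible ρ x u X U R ∧ (bigMat x u X U R).PosSemidef

def FR3proj (n ρ : ℕ) : Set ((Fin n → ℝ) × Matrix (Fin n) (Fin n) ℝ) :=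
  {p | ∃ u U R, R3Feasible ρ p.1 u p.2 U R}


/-! For a rank-one point `X = x xᵀ`, positive semidefiniteness of the moment matrix forces
`R = x uᵀ`: each vector `(-x k, e k, 0)` is isotropic, hence in its kernel. After that the
semidefinite constraint is just `U - u uᵀ ⪰ 0`, so membership in `F^{R3}_ρ` becomes a
condition on `(u, U)` alone.

To pass from `ρ` to `ρ + 1`, mimic adding to a random `ρ`-set (indicator `u`, second moments `U`)
one element chosen uniformly among the `n - ρ` outside it: with `t = 1 / (n - ρ)`,
`u' = u + t (1 - u)` and `U' = U + t (u 1ᵀ + 1 uᵀ - 2 U) + t Diag (1 - u)`. Then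
`U' - u' u'ᵀ = (1 - 2t) (U - u uᵀ) + t (Diag w - t w wᵀ)` with `w = 1 - u`, and the last matrix is
positive semidefinite by Cauchy–Schwarz since `∑ w = n - ρ`. This needs `t ≤ 1/2`; in the
remaining case `ρ + 1 = n` take `u' = 1`, `U' = 1 1ᵀ`. -/

lemma bigMat_quadForm {n : ℕ} (x u : Fin n → ℝ) (X U R : Matrix (Fin n) (Fin n) ℝ)
    (a : ℝ) (b c : Fin n → ℝ) :
    Sum.elim (fun _ => a) (Sum.elim b c) ⬝ᵥ bigMat x u X U R *ᵥ Sum.elim (fun _ => a) (Sum.elim b c)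
      = a ^ 2 + 2 * a * (x ⬝ᵥ b) + 2 * a * (u ⬝ᵥ c) + b ⬝ᵥ X *ᵥ b + 2 * (b ⬝ᵥ R *ᵥ c)
        + c ⬝ᵥ U *ᵥ c := by
  have hRt : c ⬝ᵥ Rᵀ *ᵥ b = b ⬝ᵥ R *ᵥ c := by
    rw [mulVec_transpose, dotProduct_comm, dotProduct_mulVec]
  have hrow : (of fun (_ : Unit) j => Sum.elim x u j) *ᵥ Sum.elim b c
      = fun _ => x ⬝ᵥ b + u ⬝ᵥ c := by
    ext; simp [mulVec, dotProduct, Fintype.sum_sum_type]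
  have hcol : (of fun i (_ : Unit) => Sum.elim x u i) *ᵥ (fun _ => a)
      = Sum.elim (a • x) (a • u) := by
    ext (i | i) <;> simp [mulVec, dotProduct, mul_comm]
  simp only [bigMat, fromBlocks_mulVec, Sum.elim_comp_inl, Sum.elim_comp_inr,
    sumElim_dotProduct_sumElim, dotProduct_add, hRt, hrow, hcol, dotProduct_smul,
    dotProduct_comm b x, dotProduct_comm c u]
  simp only [dotProduct, Finset.univ_unique, PUnit.default_eq_unit, mulVec, of_apply, one_mul,
    Finset.sum_const, Finset.card_singleton, one_smul, smul_eq_mul]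
  ring

lemma eq_vecMulVec_of_bigMat_posSemidef {n : ℕ} {x u : Fin n → ℝ}
    {U R : Matrix (Fin n) (Fin n) ℝ} (h : (bigMat x u (vecMulVec x x) U R).PosSemidef) :
    R = vecMulVec x u := by
  ext k j
  have hker : bigMat x u (vecMulVec x x) U R *ᵥ
      Sum.elim (fun _ => -x k) (Sum.elim (Pi.single k 1) 0) = 0 := by
    refine (h.dotProduct_mulVec_zero_iff _).1 ?_
    rw [star_trivial, bigMat_quadForm]
    simp only [dotProduct_single, dotProduct_zero, mulVec_single, mulVec_zero,
      single_dotProduct, col_apply, vecMulVec_apply, MulOpposite.op_one, one_smul, mul_one,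
      one_mul, mul_zero, add_zero]
    ring
  have hj := congrFun hker (Sum.inr (Sum.inr j))
  simp only [bigMat, fromBlocks_mulVec, Sum.elim_comp_inl, Sum.elim_comp_inr, Sum.elim_inr,
    Pi.add_apply, mulVec_single, mulVec_zero] at hj
  simp only [mulVec, dotProduct, Finset.univ_unique, PUnit.default_eq_unit, of_apply,
    Sum.elim_inr, mul_neg, Finset.sum_neg_distrib, Finset.sum_const, Finset.card_singleton,
    one_smul, MulOpposite.op_one, col_transpose, Pi.smul_apply, row_apply, Pi.zero_apply,
    add_zero] at hj
  rw [vecMulVec_apply]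
  linarith

lemma posSemidef_bigMat_rankOne_iff {n : ℕ} {x u : Fin n → ℝ} {U : Matrix (Fin n) (Fin n) ℝ} :
    (bigMat x u (vecMulVec x x) U (vecMulVec x u)).PosSemidef ↔
      (U - vecMulVec u u).PosSemidef := by
  have hquad : ∀ a b c, Sum.elim (fun _ => a) (Sum.elim b c) ⬝ᵥ
      bigMat x u (vecMulVec x x) U (vecMulVec x u) *ᵥ Sum.elim (fun _ => a) (Sum.elim b c)
        = (a + x ⬝ᵥ b + u ⬝ᵥ c) ^ 2 + c ⬝ᵥ (U - vecMulVec u u) *ᵥ c := by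
    intro a b c
    rw [bigMat_quadForm]
    simp only [vecMulVec_mulVec, sub_mulVec, dotProduct_sub, dotProduct_smul, op_smul_eq_smul,
      smul_eq_mul, dotProduct_comm b x, dotProduct_comm c u]
    ring
  have huu : (vecMulVec u u).PosSemidef := by simpa using posSemidef_vecMulVec_self_star u
  constructor
  · intro h
    refine .of_dotProduct_mulVec_nonneg
      ((h.submatrix (Sum.inr ∘ Sum.inr)).isHermitian.sub huu.isHermitian) fun c => ?_
    have := h.dotProduct_mulVec_nonneg (Sum.elim (fun _ => -(u ⬝ᵥ c)) (Sum.elim 0 c))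
    rw [star_trivial, hquad] at this
    simpa using this
  · intro h
    have hsymm : U.IsSymm := by simpa using h.isHermitian.add huu.isHermitian
    refine .of_dotProduct_mulVec_nonneg ?_ fun z => ?_
    · rw [isHermitian_iff_isSymm]
      ext (_ | p | p) (_ | q | q) <;> simp [bigMat, vecMulVec_apply, mul_comm, hsymm.apply]
    · obtain ⟨a, b, c, rfl⟩ : ∃ a b c, z = Sum.elim (fun _ => a) (Sum.elim b c) :=
        ⟨z (Sum.inl ()), z ∘ Sum.inr ∘ Sum.inl, z ∘ Sum.inr ∘ Sum.inr,
          by ext (_ | _ | _) <;> rfl⟩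
      rw [star_trivial, hquad]
      exact add_nonneg (sq_nonneg _) (by simpa using h.dotProduct_mulVec_nonneg c)

lemma posSemidef_diagonal_sub_smul_vecMulVec {ι : Type*} [Fintype ι] [DecidableEq ι]
    {w : ι → ℝ} {t : ℝ} (ht : 0 ≤ t) (hw : ∀ i, 0 ≤ w i) (hsum : t * ∑ i, w i ≤ 1) :
    (diagonal w - t • vecMulVec w w).PosSemidef := by
  refine .of_dotProduct_mulVec_nonneg ?_ fun c => ?_
  · rw [isHermitian_iff_isSymm]
    refine IsSymm.ext fun i j => ?_
    by_cases hij : i = j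
    · rw [hij]
    · simp [diagonal_apply_ne _ hij, diagonal_apply_ne _ (Ne.symm hij), vecMulVec_apply, mul_comm]
  have hcs : (w ⬝ᵥ c) ^ 2 ≤ (∑ i, w i) * ∑ i, w i * c i ^ 2 :=
    Finset.sum_sq_le_sum_mul_sum_of_sq_le_mul _ (fun i _ => hw i)
      (fun i _ => mul_nonneg (hw i) (sq_nonneg _)) (fun i _ => (by ring : _ = _).le)
  have hpos : 0 ≤ ∑ i, w i * c i ^ 2 :=
    Finset.sum_nonneg fun i _ => mul_nonneg (hw i) (sq_nonneg _)
  have hquad : star c ⬝ᵥ (diagonal w - t • vecMulVec w w) *ᵥ c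
      = ∑ i, w i * c i ^ 2 - t * (w ⬝ᵥ c) ^ 2 := by
    simp only [star_trivial, sub_mulVec, smul_mulVec, vecMulVec_mulVec, dotProduct_sub,
      dotProduct_smul, op_smul_eq_smul, smul_eq_mul, dotProduct_comm c w]
    rw [sq (w ⬝ᵥ c)]
    congr 1
    simp only [dotProduct, mulVec_diagonal]
    exact Finset.sum_congr rfl fun i _ => by ring
  rw [hquad]
  nlinarith [mul_le_mul_of_nonneg_left hcs ht, mul_le_mul_of_nonneg_right hsum hpos]

section AddElement

variable {n : ℕ}

def addElemVec (t : ℝ) (u : Fin n → ℝ) : Fin n → ℝ := fun i => u i + t * (1 - u i)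

def addElemMat (t : ℝ) (u : Fin n → ℝ) (U : Matrix (Fin n) (Fin n) ℝ) :
    Matrix (Fin n) (Fin n) ℝ :=
  of fun i j => U i j + t * (u i + u j - 2 * U i j) + if i = j then t * (1 - u i) else 0

lemma addElemMat_sub_vecMulVec (t : ℝ) (u : Fin n → ℝ) (U : Matrix (Fin n) (Fin n) ℝ) :
    addElemMat t u U - vecMulVec (addElemVec t u) (addElemVec t u) =
      (1 - 2 * t) • (U - vecMulVec u u) +
        t • (diagonal (1 - u) - t • vecMulVec (1 - u) (1 - u)) := by
  ext i j
  by_cases hij : i = j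
  · subst hij
    simp only [addElemMat, addElemVec, Matrix.sub_apply, Matrix.add_apply, Matrix.smul_apply,
      of_apply, ↓reduceIte, vecMulVec_apply, diagonal_apply_eq, Pi.sub_apply, Pi.one_apply,
      smul_eq_mul]
    ring
  · simp only [addElemMat, addElemVec, Matrix.sub_apply, Matrix.add_apply, Matrix.smul_apply,
      of_apply, hij, ↓reduceIte, vecMulVec_apply, diagonal_apply_ne _ hij, Pi.sub_apply,
      Pi.one_apply, smul_eq_mul]
    ring

end AddElement

/-- The R3(ρ) constraints on a lift `(u, U, x uᵀ)` of `(x, x xᵀ)`, less those implied by the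
others. -/
structure RankOneLift {n : ℕ} (ρ : ℕ) (x u : Fin n → ℝ) (U : Matrix (Fin n) (Fin n) ℝ) :
    Prop where
  sum_x : ∑ i, x i = 1
  sum_u : ∑ i, u i = ρ
  x_nonneg : ∀ i, 0 ≤ x i
  x_le_u : ∀ i, x i ≤ u i
  diag_U : ∀ i, U i i = u i
  rowSum_U : ∀ i, ∑ j, U i j = ρ * u i
  le_U : ∀ i j, x i * u j + x j * u i - x i * x j ≤ U i j
  posSemidef : (U - vecMulVec u u).PosSemidef

namespace RankOneLift

variable {n ρ : ℕ} {x u : Fin n → ℝ} {U : Matrix (Fin n) (Fin n) ℝ}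

lemma isSymm (h : RankOneLift ρ x u U) : U.IsSymm := by
  simpa using h.posSemidef.isHermitian.add (posSemidef_vecMulVec_self_star u).isHermitian

lemma u_nonneg (h : RankOneLift ρ x u U) (i : Fin n) : 0 ≤ u i :=
  (h.x_nonneg i).trans (h.x_le_u i)

lemma x_le_one (h : RankOneLift ρ x u U) (i : Fin n) : x i ≤ 1 :=
  h.sum_x ▸ Finset.single_le_sum (fun j _ => h.x_nonneg j) (Finset.mem_univ i)

lemma u_le_one (h : RankOneLift ρ x u U) (i : Fin n) : u i ≤ 1 := by
  have := h.posSemidef.diag_nonneg (i := i)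
  rw [Matrix.sub_apply, h.diag_U, vecMulVec_apply] at this
  nlinarith [h.u_nonneg i]

lemma addElem (h : RankOneLift ρ x u U) (hρ : ρ + 2 ≤ n) :
    RankOneLift (ρ + 1) x (addElemVec (n - ρ : ℝ)⁻¹ u) (addElemMat (n - ρ : ℝ)⁻¹ u U) := by
  set t := (n - ρ : ℝ)⁻¹
  have hnρ : (2 : ℝ) ≤ n - ρ := by
    rw [le_sub_iff_add_le']; exact_mod_cast (by omega : ρ + 2 ≤ n)
  have ht : t * (n - ρ) = 1 := inv_mul_cancel₀ (by linarith)
  have ht0 : 0 ≤ t := inv_nonneg.2 (by linarith)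
  have ht2 : 0 ≤ 1 - 2 * t := by nlinarith
  have hsum1u : ∑ i, (1 - u i) = n - ρ := by simp [Finset.sum_sub_distrib, h.sum_u]
  refine ⟨h.sum_x, ?_, h.x_nonneg, fun i => ?_, fun i => ?_, fun i => ?_, fun i j => ?_, ?_⟩
  · calc ∑ i, addElemVec t u i = ∑ i, u i + t * ∑ i, (1 - u i) := by
          simp only [addElemVec, Finset.sum_add_distrib, ← Finset.mul_sum]
      _ = ρ + 1 := by rw [h.sum_u, hsum1u, ht]
      _ = ((ρ + 1 : ℕ) : ℝ) := by push_cast; ring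
  · simp only [addElemVec]
    nlinarith [h.x_le_u i, h.u_le_one i]
  · simp only [addElemMat, addElemVec, of_apply, ↓reduceIte, h.diag_U]
    ring
  · have hrow : ∑ j, addElemMat t u U i j
        = ∑ j, U i j + t * (n * u i + ∑ j, u j - 2 * ∑ j, U i j) + t * (1 - u i) := by
      simp only [addElemMat, of_apply, Finset.sum_add_distrib, ← Finset.mul_sum,
        Finset.sum_sub_distrib, Finset.sum_ite_eq, Finset.mem_univ, if_true, Finset.sum_const,
        Finset.card_univ, Fintype.card_fin, nsmul_eq_mul]
    rw [hrow, h.rowSum_U, h.sum_u]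
    simp only [addElemVec]
    push_cast
    linear_combination (u i) * ht
  · have hdiag : 0 ≤ if i = j then t * (1 - u i) else 0 := by
      split_ifs
      exacts [mul_nonneg ht0 (sub_nonneg.2 (h.u_le_one i)), le_rfl]
    simp only [addElemMat, addElemVec, of_apply]
    nlinarith [mul_nonneg ht2 (sub_nonneg.2 (h.le_U i j)),
      mul_nonneg ht0 (mul_nonneg (sub_nonneg.2 (h.x_le_u i)) (sub_nonneg.2 (h.x_le_one j))),
      mul_nonneg ht0 (mul_nonneg (sub_nonneg.2 (h.x_le_u j)) (sub_nonneg.2 (h.x_le_one i)))]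
  · rw [addElemMat_sub_vecMulVec]
    refine (h.posSemidef.smul ht2).add (PosSemidef.smul ?_ ht0)
    refine posSemidef_diagonal_sub_smul_vecMulVec ht0 (fun i => ?_) ?_
    · simpa using h.u_le_one i
    · simp [hsum1u, ht]

lemma ones (h : RankOneLift ρ x u U) : RankOneLift n x 1 (vecMulVec 1 1) := by
  refine ⟨h.sum_x, by simp, h.x_nonneg, h.x_le_one, fun i => by simp,
    fun i => by simp, fun i j => ?_, by simp [PosSemidef.zero]⟩
  simp only [Pi.one_apply, vecMulVec_apply, mul_one]
  nlinarith [mul_nonneg (sub_nonneg.2 (h.x_le_one i)) (sub_nonneg.2 (h.x_le_one j))]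

end RankOneLift

lemma rankOne_mem_FR3proj_iff {n ρ : ℕ} {x : Fin n → ℝ} :
    (x, vecMulVec x x) ∈ FR3proj n ρ ↔ ∃ u U, RankOneLift ρ x u U := by
  constructor
  · rintro ⟨u, U, R, ⟨-, -, hx, hu, hxu, hx0, hdiag, -, -, -, hrow, hlow, -⟩, hpsd⟩
    obtain rfl := eq_vecMulVec_of_bigMat_posSemidef hpsd
    refine ⟨u, U, hx, hu, hx0, hxu, hdiag, hrow, fun i j => ?_,
      posSemidef_bigMat_rankOne_iff.1 hpsd⟩
    have := hlow i j
    simp only [vecMulVec_apply] at this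
    linarith
  · rintro ⟨u, U, h⟩
    refine ⟨u, U, vecMulVec x u, ⟨IsSymm.ext fun i j => mul_comm _ _, h.isSymm, h.sum_x,
      h.sum_u, h.x_le_u, h.x_nonneg, h.diag_U, fun i => ?_, fun j => ?_, fun i => ?_,
      h.rowSum_U, fun i j => ?_, fun i j => ?_, fun i j => ?_, fun i j => ?_, fun i j => ?_,
      fun i j => ?_⟩, posSemidef_bigMat_rankOne_iff.2 h.posSemidef⟩
    · simp [vecMulVec_apply, ← Finset.mul_sum, h.sum_x]
    · simp [vecMulVec_apply, ← Finset.sum_mul, h.sum_x]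
    · simp [vecMulVec_apply, ← Finset.mul_sum, h.sum_u, mul_comm]
    · simp only [vecMulVec_apply]; linarith [h.le_U i j]
    · simp only [vecMulVec_apply]; nlinarith [h.x_nonneg j, h.x_le_u i]
    · simp only [vecMulVec_apply]
      nlinarith [h.le_U i j, h.x_nonneg j, h.x_le_u i]
    · exact mul_nonneg (h.x_nonneg i) (h.x_nonneg j)
    · exact mul_nonneg (h.x_nonneg i) (h.u_nonneg j)
    · nlinarith [h.le_U i j, h.x_nonneg i, h.x_nonneg j, h.x_le_u i, h.x_le_u j, h.x_le_one i]

theorem stmt19 {n : ℕ} (ρ : ℕ) (h1 : 1 ≤ ρ) (h2 : ρ ≤ n - 1) (x : Fin n → ℝ)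
    (hx : (x, Matrix.vecMulVec x x) ∈ FR3proj n ρ) :
    (x, Matrix.vecMulVec x x) ∈ FR3proj n (ρ + 1) := by
  obtain ⟨u, U, h⟩ := rankOne_mem_FR3proj_iff.1 hx
  refine rankOne_mem_FR3proj_iff.2 ?_
  rcases (by omega : ρ + 1 = n ∨ ρ + 2 ≤ n) with hρ | hρ
  · exact ⟨1, vecMulVec 1 1, hρ ▸ h.ones⟩
  · exact ⟨_, _, h.addElem hρ⟩

end
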